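/- arXiv:1902.10372 — 6 statements merged into one kernel-verified Lean document; each statement's English description precedes it below -/
import Mathlib

section
/- One has ∑'_{(m,n)∈ℤ², m even, (m,n)≠(0,0)} 1/(m² + n²)² = (7/16) ∑'_{(m,n)∈ℤ²∖{(0,0)}} 1/(m² + n²)². -/
open Function

noncomputable def ff : ℤ × ℤ → ℝ := fun p => (1 : ℝ) / ((p.1 : ℝ) ^ 2 + (p.2 : ℝ) ^ 2) ^ 2

lemma ff_zero : ff 0 = 0 := by simp [ff]

lemma ff_nonneg (p : ℤ × ℤ) : 0 ≤ ff p := by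
  unfold ff; positivity

lemma ff_summable : Summable ff := by
  have h := EisensteinSeries.summable_one_div_norm_rpow (k := 4) (by norm_num)
  rw [← (finTwoArrowEquiv ℤ).symm.summable_iff] at h
  refine h.of_nonneg_of_le ff_nonneg fun p => ?_
  rcases eq_or_ne p 0 with rfl | hp
  · simp [ff, finTwoArrowEquiv, EisensteinSeries.norm_eq_max_natAbs]
  · have hn : ‖(finTwoArrowEquiv ℤ).symm p‖ = max (|(p.1 : ℝ)|) (|(p.2 : ℝ)|) := by
      rw [EisensteinSeries.norm_eq_max_natAbs]
      simp [finTwoArrowEquiv, Nat.cast_natAbs, Nat.cast_max]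
    have hpos : (0:ℝ) < max (|(p.1 : ℝ)|) (|(p.2 : ℝ)|) := by
      have h : p.1 ≠ 0 ∨ p.2 ≠ 0 := by
        rw [Ne, Prod.ext_iff, not_and_or] at hp; exact hp
      rcases h with h | h
      · exact lt_max_of_lt_left (abs_pos.mpr (Int.cast_ne_zero.mpr h))
      · exact lt_max_of_lt_right (abs_pos.mpr (Int.cast_ne_zero.mpr h))
    simp only [Function.comp_apply]
    rw [hn, Real.rpow_neg hpos.le]
    have hle : (max (|(p.1:ℝ)|) (|(p.2:ℝ)|))^2 ≤ (p.1:ℝ)^2 + (p.2:ℝ)^2 := by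
      rcases max_cases (|(p.1:ℝ)|) (|(p.2:ℝ)|) with ⟨he, _⟩ | ⟨he, _⟩ <;>
        rw [he, sq_abs] <;> nlinarith [sq_nonneg ((p.1:ℝ)), sq_nonneg ((p.2:ℝ))]
    have hsum : (0:ℝ) < (p.1:ℝ)^2 + (p.2:ℝ)^2 := lt_of_lt_of_le (by positivity) hle
    show (1 : ℝ) / _ ≤ _
    rw [one_div, inv_le_inv₀ (by positivity) (Real.rpow_pos_of_pos hpos 4)]
    have : (max (|(p.1:ℝ)|) (|(p.2:ℝ)|)) ^ (4:ℝ) = (max (|(p.1:ℝ)|) (|(p.2:ℝ)|))^2 * (max (|(p.1:ℝ)|) (|(p.2:ℝ)|))^2 := by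
        rw [← Real.rpow_natCast _ 2, ← Real.rpow_add hpos]; norm_num
    rw [this]
    calc (max (|(p.1:ℝ)|) (|(p.2:ℝ)|))^2 * (max (|(p.1:ℝ)|) (|(p.2:ℝ)|))^2
        ≤ ((p.1:ℝ)^2 + (p.2:ℝ)^2) * ((p.1:ℝ)^2 + (p.2:ℝ)^2) :=
          mul_le_mul hle hle (by positivity) (by positivity)
      _ = ((p.1:ℝ)^2 + (p.2:ℝ)^2)^2 := (sq _).symm


noncomputable def gg : ℤ × ℤ → ℝ := fun p => if Even p.1 then ff p else 0
noncomputable def BE : ℤ × ℤ → ℝ := fun p => if Even p.1 ∧ Even p.2 then ff p else 0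
noncomputable def EO : ℤ × ℤ → ℝ := fun p => if Even p.1 ∧ ¬ Even p.2 then ff p else 0
noncomputable def OE : ℤ × ℤ → ℝ := fun p => if ¬ Even p.1 ∧ Even p.2 then ff p else 0
noncomputable def SP : ℤ × ℤ → ℝ := fun p => if Even (p.1 + p.2) then ff p else 0

lemma ite_le_ff (c : Prop) [Decidable c] (p : ℤ × ℤ) : (if c then ff p else 0) ≤ ff p := by
  split <;> simp [ff_nonneg]

lemma ite_nonneg' (c : Prop) [Decidable c] (p : ℤ × ℤ) : 0 ≤ (if c then ff p else 0) := by
  split <;> simp [ff_nonneg]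

lemma gg_summable : Summable gg :=
  Summable.of_nonneg_of_le (fun p => ite_nonneg' _ p) (fun p => ite_le_ff _ p) ff_summable
lemma BE_summable : Summable BE :=
  Summable.of_nonneg_of_le (fun p => ite_nonneg' _ p) (fun p => ite_le_ff _ p) ff_summable
lemma EO_summable : Summable EO :=
  Summable.of_nonneg_of_le (fun p => ite_nonneg' _ p) (fun p => ite_le_ff _ p) ff_summable
lemma OE_summable : Summable OE :=
  Summable.of_nonneg_of_le (fun p => ite_nonneg' _ p) (fun p => ite_le_ff _ p) ff_summable
lemma SP_summable : Summable SP :=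
  Summable.of_nonneg_of_le (fun p => ite_nonneg' _ p) (fun p => ite_le_ff _ p) ff_summable

lemma BE_sum : ∑' p, BE p = (∑' p, ff p) / 16 := by
  have hinj : Function.Injective (fun p : ℤ × ℤ => ((2 * p.1, 2 * p.2) : ℤ × ℤ)) := by
    intro a b h
    simp only [Prod.ext_iff] at h ⊢
    omega
  have hsupp : Function.support BE ⊆ Set.range (fun p : ℤ × ℤ => ((2 * p.1, 2 * p.2) : ℤ × ℤ)) := by
    intro q hq
    have h : Even q.1 ∧ Even q.2 := by
      by_contra h; simp [BE, h] at hq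
    obtain ⟨⟨a, ha⟩, ⟨b, hb⟩⟩ := h
    exact ⟨(a, b), by simp [Prod.ext_iff]; omega⟩
  have := hinj.tsum_eq hsupp
  rw [← this]
  have hcong : ∀ p : ℤ × ℤ, BE (2 * p.1, 2 * p.2) = ff p / 16 := by
    intro p
    have h1 : Even (2 * p.1) := ⟨p.1, by ring⟩
    have h2 : Even (2 * p.2) := ⟨p.2, by ring⟩
    simp only [BE, h1, h2, and_self, if_true, ff]
    push_cast
    rw [div_div]
    congr 1
    ring
  calc (∑' p : ℤ × ℤ, BE (2 * p.1, 2 * p.2)) = ∑' p : ℤ × ℤ, ff p / 16 :=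
        tsum_congr hcong
    _ = (∑' p, ff p) / 16 := tsum_div_const

lemma SP_sum : ∑' p, SP p = (∑' p, ff p) / 4 := by
  have hinj : Function.Injective (fun p : ℤ × ℤ => ((p.1 + p.2, p.1 - p.2) : ℤ × ℤ)) := by
    intro a b h
    simp only [Prod.ext_iff] at h ⊢
    omega
  have hsupp : Function.support SP ⊆ Set.range (fun p : ℤ × ℤ => ((p.1 + p.2, p.1 - p.2) : ℤ × ℤ)) := by
    intro q hq
    have h : Even (q.1 + q.2) := by
      by_contra h; simp [SP, h] at hq
    obtain ⟨a, ha⟩ := h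
    exact ⟨(a, q.1 - a), by simp [Prod.ext_iff]; omega⟩
  have := hinj.tsum_eq hsupp
  rw [← this]
  have hcong : ∀ p : ℤ × ℤ, SP (p.1 + p.2, p.1 - p.2) = ff p / 4 := by
    intro p
    have h1 : Even ((p.1 + p.2) + (p.1 - p.2)) := ⟨p.1, by ring⟩
    simp only [SP, h1, if_true, ff]
    push_cast
    rw [div_div]
    congr 1
    ring
  calc (∑' p : ℤ × ℤ, SP (p.1 + p.2, p.1 - p.2)) = ∑' p : ℤ × ℤ, ff p / 4 :=
        tsum_congr hcong
    _ = (∑' p, ff p) / 4 := tsum_div_const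

lemma EO_OE_sum : ∑' p, EO p = ∑' p, OE p := by
  rw [← (Equiv.prodComm ℤ ℤ).tsum_eq OE]
  refine tsum_congr fun p => ?_
  by_cases h1 : Even p.1 <;> by_cases h2 : Even p.2 <;>
    simp [EO, OE, ff, h1, h2, add_comm]

lemma ff_split : ∀ p, ff p = SP p + EO p + OE p := by
  intro p
  by_cases h1 : Even p.1 <;> by_cases h2 : Even p.2 <;>
    simp [SP, EO, OE, Int.even_add, h1, h2]

lemma gg_split : ∀ p, gg p = BE p + EO p := by
  intro p
  by_cases h1 : Even p.1 <;> by_cases h2 : Even p.2 <;>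
    simp [gg, BE, EO, h1, h2]

theorem stmt3 :
    (∑' p : {p : ℤ × ℤ // p ≠ 0}, (if Even p.1.1 then (1 : ℝ) / ((p.1.1 : ℝ) ^ 2 + (p.1.2 : ℝ) ^ 2) ^ 2 else 0)) = (7 / 16) * (∑' p : {p : ℤ × ℤ // p ≠ 0}, (1 : ℝ) / ((p.1.1 : ℝ) ^ 2 + (p.1.2 : ℝ) ^ 2) ^ 2) := by
  have hL : (∑' p : {p : ℤ × ℤ // p ≠ 0}, (if Even p.1.1 then (1 : ℝ) / ((p.1.1 : ℝ) ^ 2 + (p.1.2 : ℝ) ^ 2) ^ 2 else 0)) = ∑' p : ℤ × ℤ, gg p := by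
    have : Function.support gg ⊆ {p : ℤ × ℤ | p ≠ 0} := by
      intro p hp
      simp only [Set.mem_setOf_eq]
      rintro rfl
      simp [gg, ff_zero] at hp
    exact tsum_subtype_eq_of_support_subset this
  have hR : (∑' p : {p : ℤ × ℤ // p ≠ 0}, (1 : ℝ) / ((p.1.1 : ℝ) ^ 2 + (p.1.2 : ℝ) ^ 2) ^ 2) = ∑' p : ℤ × ℤ, ff p := by
    have : Function.support ff ⊆ {p : ℤ × ℤ | p ≠ 0} := by
      intro p hp
      simp only [Set.mem_setOf_eq]
      rintro rfl
      exact hp ff_zero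
    exact tsum_subtype_eq_of_support_subset this
  rw [hL, hR]
  have hsplit : ∑' p, ff p = ∑' p, SP p + ∑' p, EO p + ∑' p, OE p := by
    rw [tsum_congr ff_split,
      Summable.tsum_add (SP_summable.add EO_summable) OE_summable,
      Summable.tsum_add SP_summable EO_summable]
  have hg : ∑' p, gg p = ∑' p, BE p + ∑' p, EO p := by
    rw [tsum_congr gg_split, Summable.tsum_add BE_summable EO_summable]
  rw [hg, BE_sum]
  rw [SP_sum, ← EO_OE_sum] at hsplit
  linarith
end

section
/- One has ∑'_{(m,n)∈ℤ², m even and n even, (m,n)≠(0,0)} 1/(m² + n²)² + ∑'_{(m,n)∈ℤ², m even, (m,n)≠(0,0)} 1/(m² + n²)² = ∑'_{(m,n)∈ℤ²∖{(0,0)}} m²/(m² + n²)³. -/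
/-!
Let `S = ∑ 1 / (m² + n²)²` over `ℤ² ∖ {0}`. Doubling `(m, n) ↦ (2m, 2n)` shows that the pairs
with `m, n` both even contribute `S / 16`, and the injection `(u, v) ↦ (u + v, u - v)`, which
doubles `m² + n²` and has image `{m + n even}`, shows that this sublattice contributes `S / 4`.
Summing `[m even] + [n even] + [m + n even] = 1 + 2 [m, n even]` against `1 / (m² + n²)²` and
using the symmetry `m ↔ n`, the pairs with `m` even contribute `(S + S / 8 - S / 4) / 2 = 7S / 16`.
Symmetrizing in `m, n` gives `∑ m² / (m² + n²)³ = S / 2 = S / 16 + 7S / 16`.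
-/

open Function

theorem tsum_ite_eq_tsum_comp {α β M : Type*} [AddCommMonoid M] [TopologicalSpace M]
    {P : α → Prop} [DecidablePred P] {g : β → α} (hg : Injective g)
    (hP : Set.range g = {a | P a}) (f : α → M) :
    ∑' a, (if P a then f a else 0) = ∑' b, f (g b) := by
  rw [← tsum_range f hg, tsum_subtype, hP]
  simp only [Set.indicator_apply, Set.mem_ofPred_eq]

theorem tsum_eq_tsum_subtype_ne {α M : Type*} [AddCommMonoid M] [TopologicalSpace M]
    {f : α → M} {a : α} (hf : f a = 0) : ∑' x, f x = ∑' x : {x // x ≠ a}, f x :=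
  (tsum_subtype_eq_of_support_subset (s := {x | x ≠ a}) fun _ hx h => hx (h ▸ hf)).symm

theorem ite_even_add_ite_even_add_ite_even_add {M : Type*} [AddCommMonoid M] (a b : ℤ)
    (x : M) :
    ((if Even a then x else 0) + (if Even b then x else 0) + if Even (a + b) then x else 0)
      = x + 2 • (if Even a ∧ Even b then x else 0) := by
  by_cases ha : Even a <;> by_cases hb : Even b <;>
    simp [ha, hb, Int.even_add, two_nsmul, add_assoc]

def sumSq (p : ℤ × ℤ) : ℝ := (p.1 : ℝ) ^ 2 + (p.2 : ℝ) ^ 2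

noncomputable def invSumSqSq (p : ℤ × ℤ) : ℝ := 1 / sumSq p ^ 2

theorem sumSq_nonneg (p : ℤ × ℤ) : 0 ≤ sumSq p := by unfold sumSq; positivity

theorem invSumSqSq_nonneg (p : ℤ × ℤ) : 0 ≤ invSumSqSq p := by unfold invSumSqSq; positivity

-- Since `1 / 0 = 0`, the origin contributes nothing and sums over `ℤ² ∖ {0}` are sums over `ℤ²`.
theorem invSumSqSq_zero : invSumSqSq 0 = 0 := by simp [invSumSqSq, sumSq]

theorem sumSq_swap (p : ℤ × ℤ) : sumSq p.swap = sumSq p := add_comm _ _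

theorem invSumSqSq_swap (p : ℤ × ℤ) : invSumSqSq p.swap = invSumSqSq p := by
  rw [invSumSqSq, invSumSqSq, sumSq_swap]

theorem invSumSqSq_two_mul (p : ℤ × ℤ) : invSumSqSq (2 * p.1, 2 * p.2) = invSumSqSq p / 16 := by
  have : sumSq (2 * p.1, 2 * p.2) = 4 * sumSq p := by simp only [sumSq]; push_cast; ring
  rw [invSumSqSq, invSumSqSq, this]; ring

theorem invSumSqSq_add_sub (p : ℤ × ℤ) :
    invSumSqSq (p.1 + p.2, p.1 - p.2) = invSumSqSq p / 4 := by
  have : sumSq (p.1 + p.2, p.1 - p.2) = 2 * sumSq p := by simp only [sumSq]; push_cast; ring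
  rw [invSumSqSq, invSumSqSq, this]; ring

theorem sumSq_div_sumSq_pow_three (p : ℤ × ℤ) : sumSq p / sumSq p ^ 3 = invSumSqSq p := by
  rcases (sumSq_nonneg p).eq_or_lt with h | h
  · simp [invSumSqSq, ← h]
  · rw [invSumSqSq]; field_simp

theorem summable_invSumSqSq : Summable invSumSqSq := by
  refine ((finTwoArrowEquiv ℤ).symm.summable_iff.mpr
    (EisensteinSeries.summable_one_div_norm_rpow (k := 4) (by norm_num))).of_nonneg_of_le
    invSumSqSq_nonneg fun p => ?_
  rcases eq_or_ne p 0 with rfl | hp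
  · rw [invSumSqSq_zero]; exact Real.rpow_nonneg (norm_nonneg _) _
  set N := ‖(finTwoArrowEquiv ℤ).symm p‖
  have hN : 0 < N := norm_pos_iff.mpr fun h =>
    hp (by simpa [Prod.mk_zero_zero] using congrArg (finTwoArrowEquiv ℤ) h)
  have hNle : N ≤ √(sumSq p) := by
    refine (pi_norm_le_iff_of_nonneg (Real.sqrt_nonneg _)).mpr fun i => ?_
    refine Real.le_sqrt_of_sq_le ?_
    fin_cases i <;>
      simp only [Fin.zero_eta, Fin.mk_one, finTwoArrowEquiv_symm_apply, Matrix.cons_val_zero,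
        Matrix.cons_val_one, Matrix.cons_val_fin_one, Int.norm_eq_abs, sq_abs, sumSq,
        le_add_iff_nonneg_left, le_add_iff_nonneg_right] <;>
      positivity
  have hN4 : N ^ 4 ≤ sumSq p ^ 2 := by
    calc N ^ 4 = (N ^ 2) ^ 2 := by ring
      _ ≤ sumSq p ^ 2 := by
        gcongr
        simpa [Real.sq_sqrt (sumSq_nonneg p)] using pow_le_pow_left₀ hN.le hNle 2
  rw [comp_apply, Real.rpow_neg hN.le, Real.rpow_ofNat, invSumSqSq, one_div]
  exact inv_anti₀ (by positivity) hN4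

theorem range_two_mul_prod :
    Set.range (fun q : ℤ × ℤ => (2 * q.1, 2 * q.2)) = {p | Even p.1 ∧ Even p.2} := by
  ext ⟨a, b⟩
  simp only [Set.mem_range, Set.mem_ofPred_eq, Prod.mk.injEq, Prod.exists]
  constructor
  · rintro ⟨u, v, rfl, rfl⟩
    exact ⟨even_two_mul u, even_two_mul v⟩
  · rintro ⟨⟨u, hu⟩, ⟨v, hv⟩⟩
    exact ⟨u, v, by omega, by omega⟩

theorem range_add_sub_prod :
    Set.range (fun q : ℤ × ℤ => (q.1 + q.2, q.1 - q.2)) = {p | Even (p.1 + p.2)} := by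
  ext ⟨a, b⟩
  simp only [Set.mem_range, Set.mem_ofPred_eq, Prod.mk.injEq, Prod.exists]
  constructor
  · rintro ⟨u, v, rfl, rfl⟩
    exact ⟨u, by ring⟩
  · rintro ⟨k, hk⟩
    exact ⟨k, a - k, by omega, by omega⟩

theorem tsum_ite_even_even_invSumSqSq :
    ∑' p : ℤ × ℤ, (if Even p.1 ∧ Even p.2 then invSumSqSq p else 0)
      = (∑' p, invSumSqSq p) / 16 := by
  have hinj : Injective fun q : ℤ × ℤ => (2 * q.1, 2 * q.2) := fun q r h => by
    simp only [Prod.mk.injEq] at h; ext <;> omega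
  rw [tsum_ite_eq_tsum_comp hinj range_two_mul_prod, ← tsum_div_const]
  exact tsum_congr invSumSqSq_two_mul

theorem tsum_ite_even_add_invSumSqSq :
    ∑' p : ℤ × ℤ, (if Even (p.1 + p.2) then invSumSqSq p else 0)
      = (∑' p, invSumSqSq p) / 4 := by
  have hinj : Injective fun q : ℤ × ℤ => (q.1 + q.2, q.1 - q.2) := fun q r h => by
    simp only [Prod.mk.injEq] at h; ext <;> omega
  rw [tsum_ite_eq_tsum_comp hinj range_add_sub_prod, ← tsum_div_const]
  exact tsum_congr invSumSqSq_add_sub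

theorem tsum_ite_even_snd_invSumSqSq :
    ∑' p : ℤ × ℤ, (if Even p.2 then invSumSqSq p else 0)
      = ∑' p : ℤ × ℤ, (if Even p.1 then invSumSqSq p else 0) := by
  rw [← (Equiv.prodComm ℤ ℤ).tsum_eq]
  simp only [Equiv.prodComm_apply, Prod.snd_swap, invSumSqSq_swap]

theorem summable_ite_invSumSqSq (P : ℤ × ℤ → Prop) [DecidablePred P] :
    Summable fun p => if P p then invSumSqSq p else 0 := by
  refine (summable_invSumSqSq.indicator {p | P p}).congr fun p => ?_
  by_cases h : P p <;> simp [h]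

theorem tsum_ite_even_fst_invSumSqSq :
    ∑' p : ℤ × ℤ, (if Even p.1 then invSumSqSq p else 0) = 7 * (∑' p, invSumSqSq p) / 16 := by
  have hsum : ∑' p : ℤ × ℤ, (if Even p.1 then invSumSqSq p else 0)
      + ∑' p : ℤ × ℤ, (if Even p.2 then invSumSqSq p else 0)
      + ∑' p : ℤ × ℤ, (if Even (p.1 + p.2) then invSumSqSq p else 0)
      = ∑' p, invSumSqSq p
        + 2 • ∑' p : ℤ × ℤ, (if Even p.1 ∧ Even p.2 then invSumSqSq p else 0) := by
    have h₁ := summable_ite_invSumSqSq fun p => Even p.1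
    have h₂ := summable_ite_invSumSqSq fun p => Even p.2
    have h₃ := summable_ite_invSumSqSq fun p => Even (p.1 + p.2)
    have h₄ := summable_ite_invSumSqSq fun p => Even p.1 ∧ Even p.2
    rw [← h₁.tsum_add h₂, ← (h₁.add h₂).tsum_add h₃, ← h₄.tsum_const_smul 2,
      ← summable_invSumSqSq.tsum_add (h₄.const_smul 2)]
    exact tsum_congr fun p => ite_even_add_ite_even_add_ite_even_add p.1 p.2 _
  rw [tsum_ite_even_snd_invSumSqSq, tsum_ite_even_add_invSumSqSq,
    tsum_ite_even_even_invSumSqSq, two_nsmul] at hsum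
  linarith

theorem tsum_sq_div_sumSq_pow_three :
    ∑' p : ℤ × ℤ, (p.1 : ℝ) ^ 2 / sumSq p ^ 3 = (∑' p, invSumSqSq p) / 2 := by
  have hle (p : ℤ × ℤ) : (p.1 : ℝ) ^ 2 / sumSq p ^ 3 ≤ invSumSqSq p := by
    rw [← sumSq_div_sumSq_pow_three]
    gcongr
    · exact pow_nonneg (sumSq_nonneg p) 3
    · exact le_add_of_nonneg_right (sq_nonneg _)
  have hs : Summable fun p : ℤ × ℤ => (p.1 : ℝ) ^ 2 / sumSq p ^ 3 :=
    summable_invSumSqSq.of_nonneg_of_le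
      (fun p => div_nonneg (sq_nonneg _) (pow_nonneg (sumSq_nonneg p) 3)) hle
  have hs' : Summable fun p : ℤ × ℤ => (p.2 : ℝ) ^ 2 / sumSq p ^ 3 := by
    simpa only [comp_def, Equiv.prodComm_apply, Prod.fst_swap, sumSq_swap]
      using (Equiv.prodComm ℤ ℤ).summable_iff.mpr hs
  have hswap : ∑' p : ℤ × ℤ, (p.2 : ℝ) ^ 2 / sumSq p ^ 3
      = ∑' p : ℤ × ℤ, (p.1 : ℝ) ^ 2 / sumSq p ^ 3 := by
    rw [← (Equiv.prodComm ℤ ℤ).tsum_eq]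
    simp only [Equiv.prodComm_apply, Prod.snd_swap, sumSq_swap]
  calc ∑' p : ℤ × ℤ, (p.1 : ℝ) ^ 2 / sumSq p ^ 3
      = (∑' p : ℤ × ℤ, (p.1 : ℝ) ^ 2 / sumSq p ^ 3
          + ∑' p : ℤ × ℤ, (p.2 : ℝ) ^ 2 / sumSq p ^ 3) / 2 := by rw [hswap]; ring
    _ = (∑' p, invSumSqSq p) / 2 := by
      rw [← hs.tsum_add hs']
      congr 1
      exact tsum_congr fun p => by rw [← add_div]; exact sumSq_div_sumSq_pow_three p

theorem stmt5 :
    (∑' p : {p : ℤ × ℤ // p ≠ 0}, (if Even p.1.1 ∧ Even p.1.2 then (1 : ℝ) / ((p.1.1 : ℝ) ^ 2 + (p.1.2 : ℝ) ^ 2) ^ 2 else 0)) + (∑' p : {p : ℤ × ℤ // p ≠ 0}, (if Even p.1.1 then (1 : ℝ) / ((p.1.1 : ℝ) ^ 2 + (p.1.2 : ℝ) ^ 2) ^ 2 else 0))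
      = (∑' p : {p : ℤ × ℤ // p ≠ 0}, (p.1.1 : ℝ) ^ 2 / ((p.1.1 : ℝ) ^ 2 + (p.1.2 : ℝ) ^ 2) ^ 3) := by
  calc _ = ∑' p : ℤ × ℤ, (if Even p.1 ∧ Even p.2 then invSumSqSq p else 0)
        + ∑' p : ℤ × ℤ, (if Even p.1 then invSumSqSq p else 0) := by
        congr 1 <;> symm <;> apply tsum_eq_tsum_subtype_ne <;> simp [invSumSqSq_zero]
    _ = ∑' p : ℤ × ℤ, (p.1 : ℝ) ^ 2 / sumSq p ^ 3 := by
        rw [tsum_ite_even_even_invSumSqSq, tsum_ite_even_fst_invSumSqSq,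
          tsum_sq_div_sumSq_pow_three]
        ring
    _ = _ := by
        apply tsum_eq_tsum_subtype_ne
        simp [sumSq]
end

section
/- One has ∑'_{(m,n)∈ℤ², m even and n even, (m,n)≠(0,0)} 1/(m² + n²)² + ∑'_{(m,n)∈ℤ², m even, (m,n)≠(0,0)} n²/(m² + n²)³ = ∑'_{(m,n)∈ℤ², m odd} m²/(m² + n²)³. -/
/-!
Write `Q = m² + n²`, `F = 1 / Q²`, `g = n² / Q³` and `T = ∑ F`. Since `g + g ∘ swap = F`, on every
swap-invariant set of lattice points `g` sums to half of `F`. The even–even points form `2ℤ²`, which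
carries `T / 16` of `F`, and the points of equal parity are the image of `ℤ²` under
`(m, n) ↦ (m + n, m - n)`, which doubles `Q`, so they carry `T / 4`; hence the odd–odd points carry
`3T / 16`. Splitting `{m even}` and, after swapping, `{m odd}` along the parity of `n`, the common
even–odd part cancels and the identity reduces to `T / 16 + T / 32 = 3T / 32`.
-/

open Set Function

lemma tsum_indicator_range {α β γ : Type*} [AddCommMonoid α] [TopologicalSpace α]
    {i : γ → β} (hi : Injective i) (f : β → α) :
    ∑' b, (range i).indicator f b = ∑' c, f (i c) := by
  rw [← tsum_subtype, tsum_range f hi]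

lemma tsum_indicator_union {α β : Type*} [UniformSpace α] [AddCommGroup α] [IsUniformAddGroup α]
    [CompleteSpace α] [T2Space α] {f : β → α} (hf : Summable f) {s t : Set β} (h : Disjoint s t) :
    ∑' b, (s ∪ t).indicator f b = ∑' b, s.indicator f b + ∑' b, t.indicator f b := by
  rw [indicator_union_of_disjoint h, Summable.tsum_add (hf.indicator s) (hf.indicator t)]

lemma tsum_ite_subtype_ne_zero {α M : Type*} [Zero α] [AddCommMonoid M] [TopologicalSpace M]
    (P : α → Prop) [DecidablePred P] {f : α → M} (hf : f 0 = 0) :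
    ∑' a : {a : α // a ≠ 0}, (if P a.1 then f a.1 else 0) = ∑' a, {a | P a}.indicator f a := by
  calc _ = ∑' a : {a : α | a ≠ 0}, {a | P a}.indicator f a :=
        tsum_congr fun a => by simp [indicator_apply]
    _ = _ := tsum_subtype_eq_of_support_subset fun a ha h0 => by simp [h0, hf] at ha

lemma tsum_indicator_comp_swap {α β M : Type*} [AddCommMonoid M] [TopologicalSpace M]
    (s : Set (α × β)) (f : β × α → M) :
    ∑' p, s.indicator (f ∘ Prod.swap) p = ∑' p, (Prod.swap ⁻¹' s).indicator f p := by
  rw [← (Equiv.prodComm α β).tsum_eq]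
  simp only [Equiv.coe_prodComm, ← indicator_comp_right, preimage_preimage, Prod.swap_swap,
    preimage_id']

namespace LatticeSum

def normSq (p : ℤ × ℤ) : ℝ := (p.1 : ℝ) ^ 2 + (p.2 : ℝ) ^ 2

-- `1 / 0 = 0` makes these vanish at the origin, so their sums over `ℤ²` and `ℤ² \ {0}` agree.
noncomputable def invNormSqSq (p : ℤ × ℤ) : ℝ := 1 / normSq p ^ 2

noncomputable def sndSqDivCube (p : ℤ × ℤ) : ℝ := (p.2 : ℝ) ^ 2 / normSq p ^ 3

def evenEven : Set (ℤ × ℤ) := {p | Even p.1 ∧ Even p.2}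

def evenOdd : Set (ℤ × ℤ) := {p | Even p.1 ∧ Odd p.2}

def oddOdd : Set (ℤ × ℤ) := {p | Odd p.1 ∧ Odd p.2}

lemma normSq_nonneg (p : ℤ × ℤ) : 0 ≤ normSq p := by unfold normSq; positivity

lemma normSq_pos {p : ℤ × ℤ} (hp : p ≠ 0) : 0 < normSq p := by
  unfold normSq
  obtain h | h : p.1 ≠ 0 ∨ p.2 ≠ 0 := by contrapose! hp; exact Prod.ext hp.1 hp.2
  · have : (p.1 : ℝ) ≠ 0 := by exact_mod_cast h
    positivity
  · have : (p.2 : ℝ) ≠ 0 := by exact_mod_cast h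
    positivity

lemma normSq_swap (p : ℤ × ℤ) : normSq p.swap = normSq p := add_comm _ _

lemma normSq_two_mul (p : ℤ × ℤ) : normSq (2 * p.1, 2 * p.2) = 4 * normSq p := by
  simp only [normSq]; push_cast; ring

lemma normSq_add_sub (p : ℤ × ℤ) : normSq (p.1 + p.2, p.1 - p.2) = 2 * normSq p := by
  simp only [normSq]; push_cast; ring

lemma sq_norm_le_normSq (x : Fin 2 → ℤ) : ‖x‖ ^ 2 ≤ normSq (x 0, x 1) := by
  rw [EisensteinSeries.norm_eq_max_natAbs, normSq, Nat.cast_max, Nat.cast_natAbs, Nat.cast_natAbs]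
  push_cast
  rcases max_cases |(x 0 : ℝ)| |(x 1 : ℝ)| with ⟨h, -⟩ | ⟨h, -⟩ <;> rw [h, sq_abs] <;> nlinarith

lemma invNormSqSq_nonneg (p : ℤ × ℤ) : 0 ≤ invNormSqSq p := by
  unfold invNormSqSq; have := normSq_nonneg p; positivity

lemma summable_invNormSqSq : Summable invNormSqSq := by
  rw [← (finTwoArrowEquiv ℤ).summable_iff]
  refine (EisensteinSeries.summable_one_div_norm_rpow (k := 4) (by norm_num)).of_nonneg_of_le
    (fun x => invNormSqSq_nonneg _) fun x => ?_
  rcases eq_or_ne x 0 with rfl | hx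
  · simp [invNormSqSq, normSq]
  have hx := norm_pos_iff.mpr hx
  calc invNormSqSq (finTwoArrowEquiv ℤ x) = 1 / normSq (x 0, x 1) ^ 2 := rfl
    _ ≤ 1 / (‖x‖ ^ 2) ^ 2 := by gcongr; exact sq_norm_le_normSq x
    _ = ‖x‖ ^ (-4 : ℝ) := by
      rw [Real.rpow_neg hx.le, ← pow_mul, one_div, ← Real.rpow_natCast]; norm_num

lemma sndSqDivCube_nonneg (p : ℤ × ℤ) : 0 ≤ sndSqDivCube p := by
  unfold sndSqDivCube; have := normSq_nonneg p; positivity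

lemma sndSqDivCube_le_invNormSqSq (p : ℤ × ℤ) : sndSqDivCube p ≤ invNormSqSq p := by
  rcases eq_or_ne p 0 with rfl | hp
  · simp [sndSqDivCube, invNormSqSq, normSq]
  have hN := normSq_pos hp
  have : (p.2 : ℝ) ^ 2 ≤ normSq p := by unfold normSq; nlinarith
  rw [sndSqDivCube, invNormSqSq, div_le_div_iff₀ (by positivity) (by positivity)]
  nlinarith

lemma summable_sndSqDivCube : Summable sndSqDivCube :=
  summable_invNormSqSq.of_nonneg_of_le sndSqDivCube_nonneg sndSqDivCube_le_invNormSqSq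

lemma sndSqDivCube_add_sndSqDivCube_swap (p : ℤ × ℤ) :
    sndSqDivCube p + sndSqDivCube p.swap = invNormSqSq p := by
  rcases eq_or_ne p 0 with rfl | hp
  · simp [sndSqDivCube, invNormSqSq, normSq]
  have hN := (normSq_pos hp).ne'
  rw [sndSqDivCube, sndSqDivCube, invNormSqSq, normSq_swap, ← add_div, Prod.snd_swap, add_comm,
    ← normSq]
  field_simp

lemma tsum_indicator_sndSqDivCube {s : Set (ℤ × ℤ)} (hs : Prod.swap ⁻¹' s = s) :
    ∑' p, s.indicator sndSqDivCube p = (∑' p, s.indicator invNormSqSq p) / 2 := by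
  have hswap :
      ∑' p, s.indicator (sndSqDivCube ∘ Prod.swap) p = ∑' p, s.indicator sndSqDivCube p := by
    rw [tsum_indicator_comp_swap, hs]
  have hF : invNormSqSq = sndSqDivCube + sndSqDivCube ∘ Prod.swap :=
    funext fun p => (sndSqDivCube_add_sndSqDivCube_swap p).symm
  rw [eq_div_iff two_ne_zero, hF, indicator_add']
  simp only [Pi.add_apply]
  rw [Summable.tsum_add (summable_sndSqDivCube.indicator s)
    ((summable_sndSqDivCube.comp_injective Prod.swap_injective).indicator s), hswap, mul_two]

lemma evenEven_eq_range : evenEven = range fun p : ℤ × ℤ => (2 * p.1, 2 * p.2) := by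
  ext ⟨m, n⟩
  simp [evenEven, Prod.ext_iff, even_iff_exists_two_mul, eq_comm (a := m), eq_comm (a := n)]

lemma evenEven_union_oddOdd_eq_range :
    evenEven ∪ oddOdd = range fun p : ℤ × ℤ => (p.1 + p.2, p.1 - p.2) := by
  ext ⟨m, n⟩
  simp only [evenEven, oddOdd, mem_union, mem_ofPred_eq, mem_range, Prod.ext_iff]
  constructor
  · intro h
    obtain ⟨k, hk⟩ : Even (m + n) := by
      rcases h with ⟨hm, hn⟩ | ⟨hm, hn⟩
      exacts [hm.add hn, hm.add_odd hn]
    exact ⟨(k, m - k), by omega, by omega⟩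
  · rintro ⟨⟨a, b⟩, rfl, rfl⟩
    have hpar : Even (a + b) ↔ Even (a - b) := by rw [Int.even_add, Int.even_sub]
    by_cases h : Even (a + b)
    · exact Or.inl ⟨h, hpar.mp h⟩
    · exact Or.inr ⟨Int.not_even_iff_odd.mp h, Int.not_even_iff_odd.mp (hpar.not.mp h)⟩

lemma invNormSqSq_two_mul (p : ℤ × ℤ) : invNormSqSq (2 * p.1, 2 * p.2) = invNormSqSq p / 16 := by
  rw [invNormSqSq, invNormSqSq, normSq_two_mul]; ring

lemma invNormSqSq_add_sub (p : ℤ × ℤ) :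
    invNormSqSq (p.1 + p.2, p.1 - p.2) = invNormSqSq p / 4 := by
  rw [invNormSqSq, invNormSqSq, normSq_add_sub]; ring

lemma tsum_evenEven_invNormSqSq :
    ∑' p, evenEven.indicator invNormSqSq p = (∑' p, invNormSqSq p) / 16 := by
  rw [evenEven_eq_range, tsum_indicator_range (fun p q h => by simp only [Prod.ext_iff] at h ⊢; omega),
    ← tsum_div_const]
  exact tsum_congr invNormSqSq_two_mul

lemma tsum_oddOdd_invNormSqSq :
    ∑' p, oddOdd.indicator invNormSqSq p = 3 * (∑' p, invNormSqSq p) / 16 := by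
  have hdisj : Disjoint evenEven oddOdd :=
    disjoint_left.mpr fun p h h' => Int.not_even_iff_odd.mpr h'.1 h.1
  have hunion :
      ∑' p, (evenEven ∪ oddOdd).indicator invNormSqSq p = (∑' p, invNormSqSq p) / 4 := by
    rw [evenEven_union_oddOdd_eq_range,
      tsum_indicator_range (fun p q h => by simp only [Prod.ext_iff] at h ⊢; omega), ← tsum_div_const]
    exact tsum_congr invNormSqSq_add_sub
  rw [tsum_indicator_union summable_invNormSqSq hdisj, tsum_evenEven_invNormSqSq] at hunion
  linarith

end LatticeSum

open LatticeSum in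
theorem stmt6 :
    (∑' p : {p : ℤ × ℤ // p ≠ 0}, (if Even p.1.1 ∧ Even p.1.2 then (1 : ℝ) / ((p.1.1 : ℝ) ^ 2 + (p.1.2 : ℝ) ^ 2) ^ 2 else 0)) + (∑' p : {p : ℤ × ℤ // p ≠ 0}, (if Even p.1.1 then (p.1.2 : ℝ) ^ 2 / ((p.1.1 : ℝ) ^ 2 + (p.1.2 : ℝ) ^ 2) ^ 3 else 0))
      = (∑' p : {p : ℤ × ℤ // p ≠ 0}, (if Odd p.1.1 then (p.1.1 : ℝ) ^ 2 / ((p.1.1 : ℝ) ^ 2 + (p.1.2 : ℝ) ^ 2) ^ 3 else 0)) := by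
  have hEven : {p : ℤ × ℤ | Even p.1} = evenEven ∪ evenOdd := by
    ext p; simp only [evenEven, evenOdd, mem_union, mem_ofPred_eq, ← Int.not_even_iff_odd]; tauto
  have hOdd : {p : ℤ × ℤ | Odd p.2} = evenOdd ∪ oddOdd := by
    ext p; simp only [evenOdd, oddOdd, mem_union, mem_ofPred_eq, ← Int.not_even_iff_odd]; tauto
  have hdisj₁ : Disjoint evenEven evenOdd :=
    disjoint_left.mpr fun p h h' => Int.not_even_iff_odd.mpr h'.2 h.2
  have hdisj₂ : Disjoint evenOdd oddOdd :=
    disjoint_left.mpr fun p h h' => Int.not_even_iff_odd.mpr h'.1 h.1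
  have hswap : (fun p : ℤ × ℤ => (p.1 : ℝ) ^ 2 / normSq p ^ 3) = sndSqDivCube ∘ Prod.swap := by
    ext p; simp [sndSqDivCube, normSq_swap]
  calc _ = ∑' p, evenEven.indicator invNormSqSq p
          + ∑' p, {p : ℤ × ℤ | Even p.1}.indicator sndSqDivCube p :=
        congr_arg₂ (· + ·)
          (tsum_ite_subtype_ne_zero (fun p : ℤ × ℤ => Even p.1 ∧ Even p.2)
            (by simp [invNormSqSq, normSq]))
          (tsum_ite_subtype_ne_zero (fun p : ℤ × ℤ => Even p.1) (by simp [sndSqDivCube, normSq]))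
    _ = ∑' p, evenOdd.indicator sndSqDivCube p + ∑' p, oddOdd.indicator sndSqDivCube p := by
        rw [hEven, tsum_indicator_union summable_sndSqDivCube hdisj₁,
          tsum_indicator_sndSqDivCube (s := evenEven) (ext fun _ => and_comm),
          tsum_indicator_sndSqDivCube (s := oddOdd) (ext fun _ => and_comm),
          tsum_evenEven_invNormSqSq, tsum_oddOdd_invNormSqSq]
        ring
    _ = ∑' p, {p : ℤ × ℤ | Odd p.1}.indicator (sndSqDivCube ∘ Prod.swap) p := by
        rw [tsum_indicator_comp_swap]
        exact (hOdd ▸ tsum_indicator_union summable_sndSqDivCube hdisj₂).symm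
    _ = _ := by
        rw [← hswap]
        exact (tsum_ite_subtype_ne_zero (fun p : ℤ × ℤ => Odd p.1) (by simp [normSq])).symm
end

section
/- Let S₁ = ∑_{m odd, n even} (m² − n²)/(m² + n²)³ and S₂ = ∑'_{(m,n)∈ℤ², n even, (m,n)≠(0,0)} (m² − n²)/(m² + n²)³. Then S₁ = S₂, i.e., the contribution with both m and n even vanishes. -/
/-!
Splitting `S₂` according to the parity of `m` leaves `S₁` plus the sum over the sublattice where
`m` and `n` are both even. The summand `(m² - n²) / (m² + n²)³` changes sign when `m` and `n` are
exchanged, and that sublattice is invariant under the exchange, so its sum equals its own negative.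
The splitting is justified by absolute convergence: the summand is bounded by `(m² + n²)⁻²`.
-/

open EisensteinSeries

lemma tsum_eq_zero_of_comp_equiv_eq_neg {α G : Type*} [AddCommGroup G] [TopologicalSpace G]
    [IsTopologicalAddGroup G] [T2Space G] [IsAddTorsionFree G] (e : α ≃ α) {f : α → G}
    (hf : ∀ x, f (e x) = -f x) : ∑' x, f x = 0 :=
  self_eq_neg.mp <| calc
    ∑' x, f x = ∑' x, f (e x) := (e.tsum_eq f).symm
    _ = -∑' x, f x := by simp only [hf, tsum_neg]

lemma abs_sq_sub_sq_div_sq_add_sq_pow_three_le (x y : ℝ) :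
    |(x ^ 2 - y ^ 2) / (x ^ 2 + y ^ 2) ^ 3| ≤ 1 / (x ^ 2 + y ^ 2) ^ 2 := by
  rcases (add_nonneg (sq_nonneg x) (sq_nonneg y)).eq_or_lt with hs | hs
  · simp [← hs]
  have hnum : |x ^ 2 - y ^ 2| ≤ x ^ 2 + y ^ 2 := abs_sub_le_of_nonneg_of_le (sq_nonneg x)
    (le_add_of_nonneg_right (sq_nonneg y)) (sq_nonneg y) (le_add_of_nonneg_left (sq_nonneg x))
  calc |(x ^ 2 - y ^ 2) / (x ^ 2 + y ^ 2) ^ 3|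
      = |x ^ 2 - y ^ 2| / (x ^ 2 + y ^ 2) ^ 3 := by rw [abs_div, abs_of_pos (pow_pos hs 3)]
    _ ≤ (x ^ 2 + y ^ 2) / (x ^ 2 + y ^ 2) ^ 3 := by gcongr
    _ = 1 / (x ^ 2 + y ^ 2) ^ 2 := by field_simp

lemma one_div_sq_add_sq_sq_le_max_abs_rpow (x y : ℝ) :
    1 / (x ^ 2 + y ^ 2) ^ 2 ≤ max |x| |y| ^ (-4 : ℝ) := by
  set M := max |x| |y|
  have hM : 0 ≤ M := (abs_nonneg x).trans (le_max_left _ _)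
  have hx : x ^ 2 ≤ M ^ 2 := sq_abs x ▸ pow_le_pow_left₀ (abs_nonneg x) (le_max_left _ _) 2
  have hy : y ^ 2 ≤ M ^ 2 := sq_abs y ▸ pow_le_pow_left₀ (abs_nonneg y) (le_max_right _ _) 2
  have hMs : M ^ 2 ≤ x ^ 2 + y ^ 2 := by
    rcases max_choice |x| |y| with h | h <;> rw [show M = _ from h, sq_abs] <;>
      linarith [sq_nonneg x, sq_nonneg y]
  rw [Real.rpow_neg hM, show (4 : ℝ) = (4 : ℕ) by norm_num, Real.rpow_natCast, ← one_div]
  rcases (add_nonneg (sq_nonneg x) (sq_nonneg y)).eq_or_lt with hs | hs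
  · rw [← hs, zero_pow two_ne_zero, div_zero]
    positivity
  exact one_div_le_one_div_of_le (by nlinarith) (by nlinarith)

lemma summable_one_div_sq_add_sq_sq :
    Summable fun p : ℤ × ℤ ↦ 1 / ((p.1 : ℝ) ^ 2 + (p.2 : ℝ) ^ 2) ^ 2 := by
  refine ((finTwoArrowEquiv ℤ).symm.summable_iff.mpr
    (summable_one_div_norm_rpow (k := 4) (by norm_num))).of_nonneg_of_le
    (fun p ↦ by positivity) fun ⟨m, n⟩ ↦ ?_
  simpa [norm_eq_max_natAbs, Nat.cast_natAbs] using one_div_sq_add_sq_sq_le_max_abs_rpow m n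

noncomputable def latticeSummand (p : ℤ × ℤ) : ℝ :=
  ((p.1 : ℝ) ^ 2 - (p.2 : ℝ) ^ 2) / ((p.1 : ℝ) ^ 2 + (p.2 : ℝ) ^ 2) ^ 3

lemma latticeSummand_swap (p : ℤ × ℤ) : latticeSummand p.swap = -latticeSummand p := by
  simp only [latticeSummand, Prod.fst_swap, Prod.snd_swap]
  ring

lemma summable_ite_latticeSummand (P : ℤ × ℤ → Prop) [DecidablePred P] :
    Summable fun p ↦ if P p then latticeSummand p else 0 :=
  summable_one_div_sq_add_sq_sq.of_norm_bounded fun p ↦ by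
    split_ifs
    · exact abs_sq_sub_sq_div_sq_add_sq_pow_three_le _ _
    · simp only [norm_zero]; positivity

lemma tsum_ne_zero_ite_latticeSummand (P : ℤ × ℤ → Prop) [DecidablePred P] :
    ∑' p : {p : ℤ × ℤ // p ≠ 0}, (if P p.1 then latticeSummand p.1 else 0) =
      ∑' p : ℤ × ℤ, if P p then latticeSummand p else 0 :=
  tsum_subtype_eq_of_support_subset (f := fun p ↦ if P p then latticeSummand p else 0)
    (s := {p | p ≠ 0}) fun p hp h0 ↦ hp <| by simp [h0, latticeSummand]

lemma tsum_ite_even_even_latticeSummand :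
    ∑' p : ℤ × ℤ, (if Even p.1 ∧ Even p.2 then latticeSummand p else 0) = 0 :=
  tsum_eq_zero_of_comp_equiv_eq_neg (Equiv.prodComm ℤ ℤ) fun p ↦ by
    simp only [Equiv.prodComm_apply, Prod.fst_swap, Prod.snd_swap, and_comm (a := Even p.2),
      latticeSummand_swap]
    split_ifs <;> simp

lemma ite_even_snd_eq_ite_odd_add_ite_even {M : Type*} [AddZeroClass M] (f : ℤ × ℤ → M)
    (p : ℤ × ℤ) : (if Even p.2 then f p else 0) =
      (if Odd p.1 ∧ Even p.2 then f p else 0) + (if Even p.1 ∧ Even p.2 then f p else 0) := by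
  rcases Int.even_or_odd p.1 with h | h <;>
    simp [h, Int.not_odd_iff_even.mpr, Int.not_even_iff_odd.mpr]

theorem stmt9 :
    (∑' p : {p : ℤ × ℤ // p ≠ 0}, (if Odd p.1.1 ∧ Even p.1.2 then ((p.1.1 : ℝ) ^ 2 - (p.1.2 : ℝ) ^ 2) / ((p.1.1 : ℝ) ^ 2 + (p.1.2 : ℝ) ^ 2) ^ 3 else 0))
      = (∑' p : {p : ℤ × ℤ // p ≠ 0}, (if Even p.1.2 then ((p.1.1 : ℝ) ^ 2 - (p.1.2 : ℝ) ^ 2) / ((p.1.1 : ℝ) ^ 2 + (p.1.2 : ℝ) ^ 2) ^ 3 else 0)) := by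
  calc _ = ∑' p : ℤ × ℤ, if Odd p.1 ∧ Even p.2 then latticeSummand p else 0 :=
        tsum_ne_zero_ite_latticeSummand _
    _ = ∑' p : ℤ × ℤ, ((if Odd p.1 ∧ Even p.2 then latticeSummand p else 0) +
          (if Even p.1 ∧ Even p.2 then latticeSummand p else 0)) := by
        rw [(summable_ite_latticeSummand _).tsum_add (summable_ite_latticeSummand _),
          tsum_ite_even_even_latticeSummand, add_zero]
    _ = ∑' p : ℤ × ℤ, if Even p.2 then latticeSummand p else 0 :=
        tsum_congr fun p ↦ (ite_even_snd_eq_ite_odd_add_ite_even _ p).symm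
    _ = _ := (tsum_ne_zero_ite_latticeSummand _).symm
end

section
/- Define A = ∑_{m odd, n even} (m² − n²)/(m² + n²)³ and B = ∑'_{(m,n)∈ℤ², n even, (m,n)≠(0,0)} (m² − n²)/(m² + n²)³. Then A = B. -/
/-!
The summand `F(m, n) = (m² - n²) / (m² + n²)³` is absolutely summable over `ℤ²` and changes sign
when `m` and `n` are swapped, so its sum over `ℤ²` vanishes. Being homogeneous of degree `-4`, it
satisfies `F(2m, 2n) = F(m, n) / 16`, so the sum over pairs with both entries even vanishes too.
Splitting the pairs with `n` even according to the parity of `m` gives `B = A + 0`.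
-/

open Function

lemma tsum_eq_zero_of_swap_eq_neg {α E : Type*} [AddCommGroup E] [TopologicalSpace E]
    [IsTopologicalAddGroup E] [T2Space E] [IsAddTorsionFree E] {f : α × α → E}
    (hf : ∀ p, f p.swap = -f p) : ∑' p, f p = 0 := by
  have h := (Equiv.prodComm α α).tsum_eq f
  simp only [Equiv.prodComm_apply, hf, tsum_neg] at h
  exact self_eq_neg.mp h.symm

lemma tsum_ite_even_even {E : Type*} [AddCommMonoid E] [TopologicalSpace E] (f : ℤ × ℤ → E) :
    ∑' p : ℤ × ℤ, (if Even p.1 ∧ Even p.2 then f p else 0) =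
      ∑' p : ℤ × ℤ, f (2 * p.1, 2 * p.2) := by
  have hinj : Injective (Prod.map (2 * · : ℤ → ℤ) (2 * · : ℤ → ℤ)) :=
    (mul_right_injective₀ two_ne_zero).prodMap (mul_right_injective₀ two_ne_zero)
  calc _ = ∑' p : Set.range (Prod.map (2 * · : ℤ → ℤ) (2 * · : ℤ → ℤ)), f p.val := by
        rw [tsum_subtype, Set.range_prodMap, range_two_mul]
        simp only [Set.indicator_apply, Set.mem_prod, Set.mem_ofPred_eq]
    _ = _ := tsum_range f hinj

lemma tsum_subtype_ne_zero {α E : Type*} [Zero α] [AddCommMonoid E] [TopologicalSpace E]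
    {f : α → E} (hf : f 0 = 0) : ∑' a : {a : α // a ≠ 0}, f a = ∑' a, f a :=
  tsum_subtype_eq_of_support_subset (s := {a | a ≠ 0}) fun _ ha h ↦ ha (h ▸ hf)

lemma Int.summable_prod_norm_rpow_neg {k : ℝ} (hk : 2 < k) :
    Summable fun p : ℤ × ℤ ↦ ‖p‖ ^ (-k) := by
  refine ((finTwoArrowEquiv ℤ).symm.summable_iff.mpr
    (EisensteinSeries.summable_one_div_norm_rpow hk)).congr fun p ↦ ?_
  simp [EisensteinSeries.norm_eq_max_natAbs, Prod.norm_def, Int.norm_eq_abs]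

lemma Int.norm_prod_sq_le (p : ℤ × ℤ) : ‖p‖ ^ 2 ≤ (p.1 : ℝ) ^ 2 + (p.2 : ℝ) ^ 2 := by
  rw [Prod.norm_def, Int.norm_eq_abs, Int.norm_eq_abs]
  rcases max_cases |(p.1 : ℝ)| |(p.2 : ℝ)| with ⟨h, -⟩ | ⟨h, -⟩ <;>
    rw [h, sq_abs] <;> nlinarith [sq_nonneg (p.1 : ℝ), sq_nonneg (p.2 : ℝ)]

lemma summable_inv_sq_add_sq_sq :
    Summable fun p : ℤ × ℤ ↦ (((p.1 : ℝ) ^ 2 + (p.2 : ℝ) ^ 2)⁻¹) ^ 2 := by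
  refine (Int.summable_prod_norm_rpow_neg (k := 4) (by norm_num)).of_nonneg_of_le
    (fun p ↦ by positivity) fun p ↦ ?_
  rcases eq_or_ne p 0 with rfl | hp
  · simp
  have hpos : 0 < ‖p‖ ^ 2 := by positivity
  rw [Real.rpow_neg (norm_nonneg p), show (4 : ℝ) = (2 * 2 : ℕ) by norm_num, Real.rpow_natCast,
    pow_mul, ← inv_pow]
  exact pow_le_pow_left₀ (by positivity) (inv_anti₀ hpos (Int.norm_prod_sq_le p)) 2

noncomputable def latticeTerm (p : ℤ × ℤ) : ℝ :=
  ((p.1 : ℝ) ^ 2 - (p.2 : ℝ) ^ 2) / ((p.1 : ℝ) ^ 2 + (p.2 : ℝ) ^ 2) ^ 3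

lemma latticeTerm_swap (p : ℤ × ℤ) : latticeTerm p.swap = -latticeTerm p := by
  simp only [latticeTerm, Prod.fst_swap, Prod.snd_swap]
  rw [add_comm, ← neg_sub, neg_div]

lemma latticeTerm_mul (c : ℤ) (p : ℤ × ℤ) :
    latticeTerm (c * p.1, c * p.2) = latticeTerm p / (c : ℝ) ^ 4 := by
  rcases eq_or_ne c 0 with rfl | hc
  · simp [latticeTerm]
  have hc2 : (c : ℝ) ^ 2 ≠ 0 := by positivity
  simp only [latticeTerm, Int.cast_mul, mul_pow]
  rw [← mul_sub, ← mul_add, mul_pow, show ((c : ℝ) ^ 2) ^ 3 = (c : ℝ) ^ 2 * (c : ℝ) ^ 4 by ring,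
    mul_assoc, mul_div_mul_left _ _ hc2, div_mul_eq_div_div_swap]

lemma abs_latticeTerm_le (p : ℤ × ℤ) :
    |latticeTerm p| ≤ (((p.1 : ℝ) ^ 2 + (p.2 : ℝ) ^ 2)⁻¹) ^ 2 := by
  rw [latticeTerm, abs_div]
  set s := (p.1 : ℝ) ^ 2 + (p.2 : ℝ) ^ 2
  have hs : 0 ≤ s := by positivity
  have hnum : |(p.1 : ℝ) ^ 2 - (p.2 : ℝ) ^ 2| ≤ s := abs_sub_le_of_nonneg_of_le (sq_nonneg _)
    (le_add_of_nonneg_right (sq_nonneg _)) (sq_nonneg _) (le_add_of_nonneg_left (sq_nonneg _))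
  rw [abs_of_nonneg (pow_nonneg hs 3)]
  calc |(p.1 : ℝ) ^ 2 - (p.2 : ℝ) ^ 2| / s ^ 3 ≤ s / s ^ 3 := by gcongr
    _ = (s⁻¹) ^ 2 := by
        rcases hs.eq_or_lt with h | h
        · simp [← h]
        · field_simp

lemma summable_latticeTerm : Summable latticeTerm :=
  summable_inv_sq_add_sq_sq.of_norm_bounded fun p ↦
    (Real.norm_eq_abs _).trans_le (abs_latticeTerm_le p)

lemma summable_ite_latticeTerm (c : ℤ × ℤ → Prop) [DecidablePred c] :
    Summable fun p ↦ if c p then latticeTerm p else 0 :=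
  summable_latticeTerm.abs.of_norm_bounded fun p ↦ by split_ifs <;> simp

lemma tsum_latticeTerm : ∑' p, latticeTerm p = 0 :=
  tsum_eq_zero_of_swap_eq_neg latticeTerm_swap

lemma tsum_ite_odd_even_latticeTerm :
    ∑' p : ℤ × ℤ, (if Odd p.1 ∧ Even p.2 then latticeTerm p else 0) =
      ∑' p : ℤ × ℤ, (if Even p.2 then latticeTerm p else 0) := by
  have hsplit (p : ℤ × ℤ) : (if Even p.2 then latticeTerm p else 0) =
      (if Odd p.1 ∧ Even p.2 then latticeTerm p else 0) +
        (if Even p.1 ∧ Even p.2 then latticeTerm p else 0) := by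
    rcases Int.even_or_odd p.1 with h | h
    · simp [h, Int.not_odd_iff_even.mpr h]
    · simp [h, Int.not_even_iff_odd.mpr h]
  have heven : ∑' p : ℤ × ℤ, (if Even p.1 ∧ Even p.2 then latticeTerm p else 0) = 0 := by
    simp_rw [tsum_ite_even_even, latticeTerm_mul, tsum_div_const, tsum_latticeTerm, zero_div]
  rw [tsum_congr hsplit, (summable_ite_latticeTerm _).tsum_add (summable_ite_latticeTerm _),
    heven, add_zero]

theorem stmt11 :
    (∑' p : {p : ℤ × ℤ // p ≠ 0}, (if Odd p.1.1 ∧ Even p.1.2 then ((p.1.1 : ℝ) ^ 2 - (p.1.2 : ℝ) ^ 2) / ((p.1.1 : ℝ) ^ 2 + (p.1.2 : ℝ) ^ 2) ^ 3 else 0))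
      = (∑' p : {p : ℤ × ℤ // p ≠ 0}, (if Even p.1.2 then ((p.1.1 : ℝ) ^ 2 - (p.1.2 : ℝ) ^ 2) / ((p.1.1 : ℝ) ^ 2 + (p.1.2 : ℝ) ^ 2) ^ 3 else 0)) := by
  have hA := tsum_subtype_ne_zero (f := fun p : ℤ × ℤ ↦
    if Odd p.1 ∧ Even p.2 then latticeTerm p else 0) (by simp)
  have hB := tsum_subtype_ne_zero (f := fun p : ℤ × ℤ ↦
    if Even p.2 then latticeTerm p else 0) (by simp [latticeTerm])
  exact hA.trans (tsum_ite_odd_even_latticeTerm.trans hB.symm)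
end

section
/- One has ∑'_{(m,n)≠(0,0)} (−1)^m m²/(m² + n²)³ = ∑_{m even, (m,n)≠(0,0)} (m² − n²)/(m² + n²)³ − (1/16)∑'_{(m,n)≠(0,0)} 1/(m² + n²)². -/
open Function

namespace Stmt12Aux

noncomputable def Fd (p : ℤ × ℤ) : ℝ := 1 / ((p.1 : ℝ) ^ 2 + (p.2 : ℝ) ^ 2) ^ 2
noncomputable def Md (p : ℤ × ℤ) : ℝ := (p.1 : ℝ) ^ 2 / ((p.1 : ℝ) ^ 2 + (p.2 : ℝ) ^ 2) ^ 3
noncomputable def Nd (p : ℤ × ℤ) : ℝ := (p.2 : ℝ) ^ 2 / ((p.1 : ℝ) ^ 2 + (p.2 : ℝ) ^ 2) ^ 3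

lemma Fd_nonneg (p : ℤ × ℤ) : 0 ≤ Fd p := by unfold Fd; positivity
lemma Md_nonneg (p : ℤ × ℤ) : 0 ≤ Md p := by unfold Md; positivity
lemma Nd_nonneg (p : ℤ × ℤ) : 0 ≤ Nd p := by unfold Nd; positivity

lemma denom_pos {p : ℤ × ℤ} (hp : p ≠ 0) : 0 < (p.1 : ℝ) ^ 2 + (p.2 : ℝ) ^ 2 := by
  rcases eq_or_ne p.1 0 with h1 | h1
  · have h2 : p.2 ≠ 0 := fun h2 => hp (Prod.ext h1 h2)
    have : (0:ℝ) < (p.2:ℝ)^2 := by positivity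
    nlinarith [sq_nonneg ((p.1:ℝ))]
  · have : (0:ℝ) < (p.1:ℝ)^2 := by positivity
    nlinarith [sq_nonneg ((p.2:ℝ))]

lemma Md_le_Fd (p : ℤ × ℤ) : Md p ≤ Fd p := by
  rcases eq_or_ne p 0 with rfl | hp
  · simp [Md, Fd]
  · have hd := denom_pos hp
    unfold Md Fd
    rw [div_le_div_iff₀ (by positivity) (by positivity)]
    nlinarith [sq_nonneg ((p.2:ℝ)), sq_nonneg ((p.1:ℝ)), sq_nonneg ((p.1:ℝ)^2+(p.2:ℝ)^2)]

lemma Nd_le_Fd (p : ℤ × ℤ) : Nd p ≤ Fd p := by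
  rcases eq_or_ne p 0 with rfl | hp
  · simp [Nd, Fd]
  · have hd := denom_pos hp
    unfold Nd Fd
    rw [div_le_div_iff₀ (by positivity) (by positivity)]
    nlinarith [sq_nonneg ((p.2:ℝ)), sq_nonneg ((p.1:ℝ)), sq_nonneg ((p.1:ℝ)^2+(p.2:ℝ)^2)]

lemma Md_add_Nd (p : ℤ × ℤ) : Md p + Nd p = Fd p := by
  rcases eq_or_ne p 0 with rfl | hp
  · simp [Md, Nd, Fd]
  · have hd := denom_pos hp
    unfold Md Nd Fd
    field_simp

lemma summable_Fd : Summable Fd := by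
  have h0 := EisensteinSeries.summable_one_div_norm_rpow (k := 4) (by norm_num)
  have h1 : Summable fun p : ℤ × ℤ => ‖(finTwoArrowEquiv ℤ).symm p‖ ^ (-(4:ℝ)) :=
    ((finTwoArrowEquiv ℤ).symm.summable_iff).mpr h0
  refine h1.of_nonneg_of_le Fd_nonneg fun p => ?_
  rcases eq_or_ne p 0 with rfl | hp
  · simp only [Fd]
    norm_num
  · have hnorm : ‖(finTwoArrowEquiv ℤ).symm p‖ = ((p.1.natAbs ⊔ p.2.natAbs : ℕ) : ℝ) := by
      rw [EisensteinSeries.norm_eq_max_natAbs]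
      simp [finTwoArrowEquiv]
    set t : ℝ := ((p.1.natAbs ⊔ p.2.natAbs : ℕ) : ℝ) with ht
    have htpos : 0 < t := by
      have h : p.1 ≠ 0 ∨ p.2 ≠ 0 := by
        by_contra h
        push_neg at h
        exact hp (Prod.ext h.1 h.2)
      have : p.1.natAbs ⊔ p.2.natAbs ≠ 0 := by
        rcases h with h | h
        · exact fun hc => (Int.natAbs_ne_zero.mpr h) (Nat.le_zero.mp (hc ▸ le_max_left _ _))
        · exact fun hc => (Int.natAbs_ne_zero.mpr h) (Nat.le_zero.mp (hc ▸ le_max_right _ _))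
      rw [ht]
      exact_mod_cast Nat.pos_of_ne_zero this
    have hrpow : ‖(finTwoArrowEquiv ℤ).symm p‖ ^ (-(4:ℝ)) = 1 / t ^ 4 := by
      rw [hnorm, show (-(4:ℝ)) = -((4:ℕ):ℝ) by norm_num, Real.rpow_neg htpos.le,
        Real.rpow_natCast, one_div]
    rw [hrpow]
    have h1a : (p.1.natAbs : ℝ) = |(p.1 : ℝ)| := by simp [Nat.cast_natAbs]
    have h2a : (p.2.natAbs : ℝ) = |(p.2 : ℝ)| := by simp [Nat.cast_natAbs]
    have htsq : t ^ 2 ≤ (p.1 : ℝ) ^ 2 + (p.2 : ℝ) ^ 2 := by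
      rw [ht]
      push_cast [Nat.cast_max]
      rcases max_cases ((p.1.natAbs : ℝ)) ((p.2.natAbs : ℝ)) with ⟨hm, _⟩ | ⟨hm, _⟩ <;>
        rw [hm] <;> [rw [h1a]; rw [h2a]] <;> rw [sq_abs] <;>
        nlinarith [sq_nonneg ((p.1:ℝ)), sq_nonneg ((p.2:ℝ))]
    have ht4 : t ^ 4 ≤ ((p.1 : ℝ) ^ 2 + (p.2 : ℝ) ^ 2) ^ 2 := by nlinarith [sq_nonneg t, htpos.le]
    unfold Fd
    exact one_div_le_one_div_of_le (by positivity) ht4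

lemma summable_dom {f : ℤ × ℤ → ℝ} (h0 : ∀ p, 0 ≤ f p) (h1 : ∀ p, f p ≤ Fd p) : Summable f :=
  summable_Fd.of_nonneg_of_le h0 h1

lemma summable_ind (P : ℤ × ℤ → Prop) [DecidablePred P] {f : ℤ × ℤ → ℝ}
    (h0 : ∀ p, 0 ≤ f p) (h1 : ∀ p, f p ≤ Fd p) :
    Summable fun p => if P p then f p else 0 := by
  refine summable_dom (fun p => ?_) (fun p => ?_)
  · by_cases h : P p <;> simp [h, h0 p]
  · by_cases h : P p <;> simp [h, h1 p, Fd_nonneg p]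

lemma summable_ind' (P : ℤ × ℤ → Prop) [DecidablePred P] {f : ℤ × ℤ → ℝ}
    (h0 : ∀ p, 0 ≤ f p) (h1 : ∀ p, f p ≤ Fd p) :
    Summable fun p => if P p then 0 else f p := by
  refine summable_dom (fun p => ?_) (fun p => ?_)
  · by_cases h : P p <;> simp [h, h0 p]
  · by_cases h : P p <;> simp [h, h1 p, Fd_nonneg p]

lemma tsum_split (P : ℤ × ℤ → Prop) [DecidablePred P] {f : ℤ × ℤ → ℝ}
    (h0 : ∀ p, 0 ≤ f p) (h1 : ∀ p, f p ≤ Fd p) :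
    (∑' p, if P p then f p else 0) + (∑' p, if P p then 0 else f p) = ∑' p, f p := by
  rw [← Summable.tsum_add (summable_ind P h0 h1) (summable_ind' P h0 h1)]
  refine tsum_congr fun p => ?_
  by_cases h : P p <;> simp [h]

/-- doubling: sum over even-even pairs equals B/16 -/
lemma sum_ee : (∑' p : ℤ × ℤ, if Even p.1 ∧ Even p.2 then Fd p else 0)
    = (1/16) * ∑' p : ℤ × ℤ, Fd p := by
  have hinj : Function.Injective (fun a : ℤ × ℤ => ((2 * a.1, 2 * a.2) : ℤ × ℤ)) := by
    intro a b h
    simp only [Prod.mk.injEq] at h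
    exact Prod.ext (by omega) (by omega)
  have hsupp : support (fun p : ℤ × ℤ => if Even p.1 ∧ Even p.2 then Fd p else 0)
      ⊆ Set.range (fun a : ℤ × ℤ => ((2 * a.1, 2 * a.2) : ℤ × ℤ)) := by
    intro x hx
    simp only [mem_support, ne_eq, ite_eq_right_iff, not_forall] at hx
    obtain ⟨⟨⟨a, ha⟩, ⟨b, hb⟩⟩, -⟩ := hx
    exact ⟨(a, b), Prod.ext (by simpa [two_mul] using ha.symm) (by simpa [two_mul] using hb.symm)⟩
  have key := hinj.tsum_eq hsupp
  rw [← key]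
  rw [← tsum_mul_left]
  refine tsum_congr fun a => ?_
  have he1 : Even (2 * a.1) := even_two_mul a.1
  have he2 : Even (2 * a.2) := even_two_mul a.2
  simp only [he1, he2, and_self, if_true]
  show Fd (2 * a.1, 2 * a.2) = (1/16) * Fd a
  unfold Fd
  have : ((2 * a.1 : ℤ) : ℝ) ^ 2 + ((2 * a.2 : ℤ) : ℝ) ^ 2
      = 4 * ((a.1 : ℝ) ^ 2 + (a.2 : ℝ) ^ 2) := by push_cast; ring
  rw [this]
  rw [mul_pow]
  rw [show ((4:ℝ))^2 = 16 by norm_num]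
  rw [show (1:ℝ)/16 * (1 / ((a.1:ℝ)^2+(a.2:ℝ)^2)^2) = 1/(16 * ((a.1:ℝ)^2+(a.2:ℝ)^2)^2) by
    rw [div_mul_div_comm]; norm_num]

/-- rotation: sum over same-parity pairs equals B/4 -/
lemma sum_same : (∑' p : ℤ × ℤ, if Even (p.1 + p.2) then Fd p else 0)
    = (1/4) * ∑' p : ℤ × ℤ, Fd p := by
  have hinj : Function.Injective (fun a : ℤ × ℤ => ((a.1 + a.2, a.1 - a.2) : ℤ × ℤ)) := by
    intro a b h
    simp only [Prod.mk.injEq] at h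
    exact Prod.ext (by omega) (by omega)
  have hsupp : support (fun p : ℤ × ℤ => if Even (p.1 + p.2) then Fd p else 0)
      ⊆ Set.range (fun a : ℤ × ℤ => ((a.1 + a.2, a.1 - a.2) : ℤ × ℤ)) := by
    intro x hx
    simp only [mem_support, ne_eq, ite_eq_right_iff, not_forall] at hx
    obtain ⟨⟨c, hc⟩, -⟩ := hx
    exact ⟨(c, x.1 - c), Prod.ext (by simp) (by simp; omega)⟩
  have key := hinj.tsum_eq hsupp
  rw [← key]
  rw [← tsum_mul_left]
  refine tsum_congr fun a => ?_
  have he : Even ((a.1 + a.2) + (a.1 - a.2)) := ⟨a.1, by ring⟩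
  simp only [he, if_true]
  show Fd (a.1 + a.2, a.1 - a.2) = (1/4) * Fd a
  unfold Fd
  have : ((a.1 + a.2 : ℤ) : ℝ) ^ 2 + ((a.1 - a.2 : ℤ) : ℝ) ^ 2
      = 2 * ((a.1 : ℝ) ^ 2 + (a.2 : ℝ) ^ 2) := by push_cast; ring
  rw [this, mul_pow]
  rw [show ((2:ℝ))^2 = 4 by norm_num]
  rw [show (1:ℝ)/4 * (1 / ((a.1:ℝ)^2+(a.2:ℝ)^2)^2) = 1/(4 * ((a.1:ℝ)^2+(a.2:ℝ)^2)^2) by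
    rw [div_mul_div_comm]; norm_num]

lemma Fd_swap (p : ℤ × ℤ) : Fd (p.2, p.1) = Fd p := by unfold Fd; ring_nf

lemma Fd_swap' (p : ℤ × ℤ) : Fd p.swap = Fd p := Fd_swap p

end Stmt12Aux

open Stmt12Aux in
theorem stmt12 :
    (∑' p : {p : ℤ × ℤ // p ≠ 0}, ((-1 : ℝ) ^ p.1.1 * (p.1.1 : ℝ) ^ 2) / ((p.1.1 : ℝ) ^ 2 + (p.1.2 : ℝ) ^ 2) ^ 3)
      = (∑' p : {p : ℤ × ℤ // p ≠ 0}, (if Even p.1.1 then ((p.1.1 : ℝ) ^ 2 - (p.1.2 : ℝ) ^ 2) / ((p.1.1 : ℝ) ^ 2 + (p.1.2 : ℝ) ^ 2) ^ 3 else 0)) - (1 / 16) * (∑' p : {p : ℤ × ℤ // p ≠ 0}, (1 : ℝ) / ((p.1.1 : ℝ) ^ 2 + (p.1.2 : ℝ) ^ 2) ^ 2) := by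
  classical
  have hsub : ∀ (f : ℤ × ℤ → ℝ), f 0 = 0 →
      (∑' p : {p : ℤ × ℤ // p ≠ 0}, f ↑p) = ∑' p : ℤ × ℤ, f p := by
    intro f hf
    refine tsum_subtype_eq_of_support_subset ?_
    intro x hx
    rintro rfl
    exact hx hf
  have e1 : (∑' p : {p : ℤ × ℤ // p ≠ 0},
        ((-1 : ℝ) ^ p.1.1 * (p.1.1 : ℝ) ^ 2) / ((p.1.1 : ℝ) ^ 2 + (p.1.2 : ℝ) ^ 2) ^ 3)
      = ∑' p : ℤ × ℤ, ((-1 : ℝ) ^ p.1 * (p.1 : ℝ) ^ 2) / ((p.1 : ℝ) ^ 2 + (p.2 : ℝ) ^ 2) ^ 3 :=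
    hsub (fun p : ℤ × ℤ => ((-1 : ℝ) ^ p.1 * (p.1 : ℝ) ^ 2) / ((p.1 : ℝ) ^ 2 + (p.2 : ℝ) ^ 2) ^ 3) (by norm_num)
  have e2 : (∑' p : {p : ℤ × ℤ // p ≠ 0},
        (if Even p.1.1 then ((p.1.1 : ℝ) ^ 2 - (p.1.2 : ℝ) ^ 2) / ((p.1.1 : ℝ) ^ 2 + (p.1.2 : ℝ) ^ 2) ^ 3 else 0))
      = ∑' p : ℤ × ℤ, (if Even p.1 then ((p.1 : ℝ) ^ 2 - (p.2 : ℝ) ^ 2) / ((p.1 : ℝ) ^ 2 + (p.2 : ℝ) ^ 2) ^ 3 else 0) :=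
    hsub (fun p : ℤ × ℤ => (if Even p.1 then ((p.1 : ℝ) ^ 2 - (p.2 : ℝ) ^ 2) / ((p.1 : ℝ) ^ 2 + (p.2 : ℝ) ^ 2) ^ 3 else 0)) (by norm_num)
  have e3 : (∑' p : {p : ℤ × ℤ // p ≠ 0}, (1 : ℝ) / ((p.1.1 : ℝ) ^ 2 + (p.1.2 : ℝ) ^ 2) ^ 2)
      = ∑' p : ℤ × ℤ, (1 : ℝ) / ((p.1 : ℝ) ^ 2 + (p.2 : ℝ) ^ 2) ^ 2 :=
    hsub (fun p : ℤ × ℤ => (1 : ℝ) / ((p.1 : ℝ) ^ 2 + (p.2 : ℝ) ^ 2) ^ 2) (by norm_num)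
  rw [e1, e2, e3]
  have eB : (∑' p : ℤ × ℤ, (1 : ℝ) / ((p.1 : ℝ) ^ 2 + (p.2 : ℝ) ^ 2) ^ 2) = ∑' p : ℤ × ℤ, Fd p :=
    tsum_congr fun p => rfl
  rw [eB]
  -- summability facts
  have sM : Summable Md := summable_dom Md_nonneg Md_le_Fd
  have sN : Summable Nd := summable_dom Nd_nonneg Nd_le_Fd
  have sMe : Summable (fun p : ℤ × ℤ => if Even p.1 then Md p else 0) :=
    summable_ind _ Md_nonneg Md_le_Fd
  have sMo : Summable (fun p : ℤ × ℤ => if Even p.1 then 0 else Md p) :=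
    summable_ind' _ Md_nonneg Md_le_Fd
  have sNe : Summable (fun p : ℤ × ℤ => if Even p.1 then Nd p else 0) :=
    summable_ind _ Nd_nonneg Nd_le_Fd
  have sFee : Summable (fun p : ℤ × ℤ => if Even p.1 ∧ Even p.2 then Fd p else 0) :=
    summable_ind _ Fd_nonneg (fun p => le_refl _)
  have sFeo : Summable (fun p : ℤ × ℤ => if Even p.1 ∧ ¬ Even p.2 then Fd p else 0) :=
    summable_ind _ Fd_nonneg (fun p => le_refl _)
  have sFoe : Summable (fun p : ℤ × ℤ => if ¬ Even p.1 ∧ Even p.2 then Fd p else 0) :=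
    summable_ind _ Fd_nonneg (fun p => le_refl _)
  have sFoo : Summable (fun p : ℤ × ℤ => if ¬ Even p.1 ∧ ¬ Even p.2 then Fd p else 0) :=
    summable_ind _ Fd_nonneg (fun p => le_refl _)
  -- S = Me - Mo
  have eS : (∑' p : ℤ × ℤ, ((-1 : ℝ) ^ p.1 * (p.1 : ℝ) ^ 2) / ((p.1 : ℝ) ^ 2 + (p.2 : ℝ) ^ 2) ^ 3)
      = (∑' p : ℤ × ℤ, if Even p.1 then Md p else 0)
        - (∑' p : ℤ × ℤ, if Even p.1 then 0 else Md p) := by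
    rw [← Summable.tsum_sub sMe sMo]
    refine tsum_congr fun p => ?_
    by_cases h : Even p.1
    · simp [h, Md, Even.neg_one_zpow h]
    · simp [h, Md, Odd.neg_one_zpow (Int.not_even_iff_odd.mp h), neg_div]
  -- A = Me - Ne
  have eA : (∑' p : ℤ × ℤ, (if Even p.1 then ((p.1 : ℝ) ^ 2 - (p.2 : ℝ) ^ 2) / ((p.1 : ℝ) ^ 2 + (p.2 : ℝ) ^ 2) ^ 3 else 0))
      = (∑' p : ℤ × ℤ, if Even p.1 then Md p else 0)
        - (∑' p : ℤ × ℤ, if Even p.1 then Nd p else 0) := by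
    rw [← Summable.tsum_sub sMe sNe]
    refine tsum_congr fun p => ?_
    by_cases h : Even p.1
    · simp [h, Md, Nd, sub_div]
    · simp [h]
  -- Me + Mo = TM
  have eMsplit := tsum_split (fun p : ℤ × ℤ => Even p.1) Md_nonneg Md_le_Fd
  -- TN = TM
  have eNM : (∑' p : ℤ × ℤ, Nd p) = ∑' p : ℤ × ℤ, Md p := by
    rw [← (Equiv.prodComm ℤ ℤ).tsum_eq Md]
    refine tsum_congr fun p => ?_
    simp only [Equiv.prodComm_apply]
    unfold Md Nd
    rw [Prod.fst_swap, Prod.snd_swap, add_comm ((p.2 : ℝ) ^ 2)]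
  -- TM + TN = B
  have eMN : (∑' p : ℤ × ℤ, Md p) + (∑' p : ℤ × ℤ, Nd p) = ∑' p : ℤ × ℤ, Fd p := by
    rw [← Summable.tsum_add sM sN]
    exact tsum_congr Md_add_Nd
  -- Me + Ne = Ce
  have eMeNe : (∑' p : ℤ × ℤ, if Even p.1 then Md p else 0)
        + (∑' p : ℤ × ℤ, if Even p.1 then Nd p else 0)
      = ∑' p : ℤ × ℤ, if Even p.1 then Fd p else 0 := by
    rw [← Summable.tsum_add sMe sNe]
    refine tsum_congr fun p => ?_
    by_cases h : Even p.1 <;> simp [h, Md_add_Nd p]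
  -- Ce = Bee + Beo
  have eCe : (∑' p : ℤ × ℤ, if Even p.1 then Fd p else 0)
      = (∑' p : ℤ × ℤ, if Even p.1 ∧ Even p.2 then Fd p else 0)
        + (∑' p : ℤ × ℤ, if Even p.1 ∧ ¬ Even p.2 then Fd p else 0) := by
    rw [← Summable.tsum_add sFee sFeo]
    refine tsum_congr fun p => ?_
    by_cases h1 : Even p.1 <;> by_cases h2 : Even p.2 <;> simp [h1, h2]
  -- Co = Boe + Boo
  have eCo : (∑' p : ℤ × ℤ, if Even p.1 then 0 else Fd p)
      = (∑' p : ℤ × ℤ, if ¬ Even p.1 ∧ Even p.2 then Fd p else 0)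
        + (∑' p : ℤ × ℤ, if ¬ Even p.1 ∧ ¬ Even p.2 then Fd p else 0) := by
    rw [← Summable.tsum_add sFoe sFoo]
    refine tsum_congr fun p => ?_
    by_cases h1 : Even p.1 <;> by_cases h2 : Even p.2 <;> simp [h1, h2]
  -- Ce + Co = B
  have eFsplit := tsum_split (fun p : ℤ × ℤ => Even p.1) Fd_nonneg (fun p => le_refl _)
  -- same parity = Bee + Boo
  have eSameSplit : (∑' p : ℤ × ℤ, if Even (p.1 + p.2) then Fd p else 0)
      = (∑' p : ℤ × ℤ, if Even p.1 ∧ Even p.2 then Fd p else 0)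
        + (∑' p : ℤ × ℤ, if ¬ Even p.1 ∧ ¬ Even p.2 then Fd p else 0) := by
    rw [← Summable.tsum_add sFee sFoo]
    refine tsum_congr fun p => ?_
    by_cases h1 : Even p.1 <;> by_cases h2 : Even p.2 <;> simp [Int.even_add, h1, h2]
  have eDouble := sum_ee
  have eRot := sum_same
  -- Beo = Boe
  have eSwapEO : (∑' p : ℤ × ℤ, if Even p.1 ∧ ¬ Even p.2 then Fd p else 0)
      = (∑' p : ℤ × ℤ, if ¬ Even p.1 ∧ Even p.2 then Fd p else 0) := by
    rw [← (Equiv.prodComm ℤ ℤ).tsum_eq (fun p : ℤ × ℤ => if Even p.1 ∧ ¬ Even p.2 then Fd p else 0)]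
    refine tsum_congr fun p => ?_
    simp only [Equiv.prodComm_apply, Prod.fst_swap, Prod.snd_swap]
    by_cases h1 : Even p.1 <;> by_cases h2 : Even p.2 <;>
      simp [h1, h2, Fd_swap' p]
  rw [eS, eA]
  linarith [eMsplit, eNM, eMN, eMeNe, eCe, eCo, eFsplit, eSameSplit, eDouble, eRot, eSwapEO]
end
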